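/- arXiv:2011.02654 — 4 statements merged into one kernel-verified Lean document; each statement's English description precedes it below -/
import Mathlib

section
/- Let Δx > 0, λ ∈ ℝ with λ ≠ 0, and define g(λ, Δx) = 2λ²Δx² · e^{3λ²Δx²} / (e^{4λ²Δx²} − 1). Then as Δx → 0, g(λ, Δx) = 1/2 + (1/2)λ²Δx² + O(Δx⁴); more precisely, |g(λ, Δx) − 1/2 − (1/2)λ²Δx²| ≤ C·Δx⁴ for some constant C depending only on λ, for all sufficiently small Δx > 0. -/
open Real

set_option maxHeartbeats 1000000 in
theorem stmt_0 (lam : ℝ) (hlam : lam ≠ 0) :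
    ∃ C > 0, ∃ δ > 0, ∀ dx : ℝ, 0 < dx → dx < δ →
      |2 * lam ^ 2 * dx ^ 2 * Real.exp (3 * lam ^ 2 * dx ^ 2) /
          (Real.exp (4 * lam ^ 2 * dx ^ 2) - 1)
        - 1 / 2 - 1 / 2 * lam ^ 2 * dx ^ 2| ≤ C * dx ^ 4 := by
  have hl2 : (0:ℝ) < lam ^ 2 := by positivity
  refine ⟨2 * lam ^ 4, by positivity, 1 / (2 * |lam|), by positivity, ?_⟩
  intro dx hdx hdxδ
  have habs : 0 < |lam| := abs_pos.mpr hlam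
  set t : ℝ := lam ^ 2 * dx ^ 2 with ht
  have ht0 : 0 < t := by positivity
  have ht4 : t ≤ 1 / 4 := by
    have h1 : dx * (2 * |lam|) < 1 := by
      have := (lt_div_iff₀ (by positivity : (0:ℝ) < 2 * |lam|)).mp hdxδ
      linarith
    have h2 : lam ^ 2 = |lam| ^ 2 := (sq_abs lam).symm
    nlinarith [mul_pos hdx habs]
  rw [show 3 * lam ^ 2 * dx ^ 2 = 3 * t by rw [ht]; ring,
      show 4 * lam ^ 2 * dx ^ 2 = 4 * t by rw [ht]; ring,
      show 2 * lam ^ 2 * dx ^ 2 = 2 * t by rw [ht]; ring,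
      show 1 / 2 * lam ^ 2 * dx ^ 2 = 1 / 2 * t by rw [ht]; ring]
  -- Taylor bounds
  have h3t : |(3:ℝ) * t| ≤ 1 := by rw [abs_of_pos (by linarith)]; linarith
  have h4t : |(4:ℝ) * t| ≤ 1 := by rw [abs_of_pos (by linarith)]; linarith
  have hE1 := Real.exp_bound h3t (n := 3) (by norm_num)
  have hE2 := Real.exp_bound h4t (n := 4) (by norm_num)
  rw [abs_of_pos (by linarith : (0:ℝ) < 3 * t)] at hE1
  rw [abs_of_pos (by linarith : (0:ℝ) < 4 * t)] at hE2
  simp only [Finset.sum_range_succ, Finset.sum_range_zero] at hE1 hE2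
  norm_num [Nat.factorial] at hE1 hE2
  have hE1' : |Real.exp (3 * t) - (1 + 3 * t + 9 / 2 * t ^ 2)| ≤ 6 * t ^ 3 := by
    have : (1:ℝ) + 3 * t + (3 * t) ^ 2 / 2 = 1 + 3 * t + 9 / 2 * t ^ 2 := by ring
    calc |Real.exp (3 * t) - (1 + 3 * t + 9 / 2 * t ^ 2)|
        = |Real.exp (3 * t) - (1 + 3 * t + (3 * t) ^ 2 / 2)| := by rw [this]
      _ ≤ (3 * t) ^ 3 * (2 / 9) := hE1
      _ ≤ 6 * t ^ 3 := by nlinarith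
  have hE2' : |Real.exp (4 * t) - (1 + 4 * t + 8 * t ^ 2 + 32 / 3 * t ^ 3)| ≤
      40 / 3 * t ^ 4 := by
    have : (1:ℝ) + 4 * t + (4 * t) ^ 2 / 2 + (4 * t) ^ 3 / 6
        = 1 + 4 * t + 8 * t ^ 2 + 32 / 3 * t ^ 3 := by ring
    calc |Real.exp (4 * t) - (1 + 4 * t + 8 * t ^ 2 + 32 / 3 * t ^ 3)|
        = |Real.exp (4 * t) - (1 + 4 * t + (4 * t) ^ 2 / 2 + (4 * t) ^ 3 / 6)| := by
          rw [this]
      _ ≤ (4 * t) ^ 4 * (5 / 96) := hE2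
      _ ≤ 40 / 3 * t ^ 4 := by nlinarith
  have hDlb : 4 * t ≤ Real.exp (4 * t) - 1 := by
    have := Real.add_one_le_exp (4 * t); linarith
  have hD : (0:ℝ) < Real.exp (4 * t) - 1 := by linarith
  have key : 2 * t * Real.exp (3 * t) / (Real.exp (4 * t) - 1) - 1 / 2 - 1 / 2 * t
      = (2 * t * Real.exp (3 * t) - (1 / 2 + 1 / 2 * t) * (Real.exp (4 * t) - 1))
        / (Real.exp (4 * t) - 1) := by
    rw [sub_div, mul_div_cancel_right₀ _ hD.ne']
    ring
  rw [key, abs_div, abs_of_pos hD, div_le_iff₀ hD]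
  have hN : |2 * t * Real.exp (3 * t) - (1 / 2 + 1 / 2 * t) * (Real.exp (4 * t) - 1)|
      ≤ 7 * t ^ 3 := by
    rw [abs_le] at hE1' hE2' ⊢
    constructor <;>
      nlinarith [ht0, ht4,
        mul_nonneg (pow_nonneg ht0.le 3) (by linarith : (0:ℝ) ≤ 1/4 - t),
        mul_nonneg (pow_nonneg ht0.le 4) (by linarith : (0:ℝ) ≤ 1/4 - t),
        mul_le_mul_of_nonneg_left hE1'.2 (le_of_lt (by linarith : (0:ℝ) < 2 * t)),
        mul_le_mul_of_nonneg_left hE1'.1 (le_of_lt (by linarith : (0:ℝ) < 2 * t)),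
        mul_le_mul_of_nonneg_left hE2'.2 (by linarith : (0:ℝ) ≤ 1 / 2 + 1 / 2 * t),
        mul_le_mul_of_nonneg_left hE2'.1 (by linarith : (0:ℝ) ≤ 1 / 2 + 1 / 2 * t)]
  have ht2 : lam ^ 4 * dx ^ 4 = t ^ 2 := by rw [ht]; ring
  calc |2 * t * Real.exp (3 * t) - (1 / 2 + 1 / 2 * t) * (Real.exp (4 * t) - 1)|
      ≤ 7 * t ^ 3 := hN
    _ ≤ 2 * t ^ 2 * (4 * t) := by nlinarith
    _ ≤ 2 * lam ^ 4 * dx ^ 4 * (Real.exp (4 * t) - 1) := by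
        rw [show 2 * lam ^ 4 * dx ^ 4 = 2 * t ^ 2 by rw [← ht2]; ring]
        have : (0:ℝ) ≤ 2 * t ^ 2 := by positivity
        exact mul_le_mul_of_nonneg_left hDlb this
end

section
/- Let u : ℝ → ℝ be C⁴ in a neighborhood of a point x₀, let Δx > 0, and let ū₋ = (1/Δx)∫_{x₀−Δx}^{x₀} u(ξ)dξ and ū₊ = (1/Δx)∫_{x₀}^{x₀+Δx} u(ξ)dξ be the cell averages of the two cells adjacent to x₀. Then (1/2 + λ²Δx²/2 − λ⁴Δx⁴/12)(ū₋ + ū₊) = u(x₀) + Δx²(λ²u(x₀) + u''(x₀)/6) + O(Δx⁴) as Δx → 0, for any fixed λ ∈ ℝ. -/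
open Real intervalIntegral
open Set

lemma iterWithin_open_eq (f : ℝ → ℝ) {s : Set ℝ} (hs : IsOpen s) (n : ℕ) {y : ℝ} (hy : y ∈ s) :
    iteratedDerivWithin n f s y = iteratedDeriv n f y := by
  rw [iteratedDerivWithin_eq_iteratedFDerivWithin, iteratedDeriv_eq_iteratedFDeriv,
    iteratedFDerivWithin_of_isOpen n hs hy]

lemma iterWithin_eq (f : ℝ → ℝ) {s : Set ℝ} (hs : IsOpen s) (hf : ContDiffOn ℝ 4 f s)
    {a b : ℝ} (hab : a < b) (hsub : Set.Icc a b ⊆ s) {k : ℕ} (hk : (k : WithTop ℕ∞) ≤ 4)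
    {y : ℝ} (hy : y ∈ Set.Icc a b) :
    iteratedDerivWithin k f (Set.Icc a b) y = iteratedDeriv k f y := by
  have h1 := (hf.ftaylorSeriesWithin hs.uniqueDiffOn).mono hsub
  have h2 := (h1.eq_iteratedFDerivWithin_of_uniqueDiffOn hk (uniqueDiffOn_Icc hab) hy).symm
  have h3 : ftaylorSeriesWithin ℝ f s y k = iteratedFDerivWithin ℝ k f s y := rfl
  rw [iteratedDerivWithin_eq_iteratedFDerivWithin, iteratedDeriv_eq_iteratedFDeriv, h2, h3,
    iteratedFDerivWithin_of_isOpen k hs (hsub hy)]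

noncomputable def T4 (f : ℝ → ℝ) (x₀ x : ℝ) : ℝ :=
  f x₀ + iteratedDeriv 1 f x₀ * (x - x₀) + iteratedDeriv 2 f x₀ * (x - x₀) ^ 2 / 2
    + iteratedDeriv 3 f x₀ * (x - x₀) ^ 3 / 6

lemma right_bound (f : ℝ → ℝ) {s : Set ℝ} (hs : IsOpen s) (hf : ContDiffOn ℝ 4 f s)
    {x₀ dx M : ℝ} (hdx : 0 < dx) (hsub : Set.Icc x₀ (x₀ + dx) ⊆ s)
    (hM : ∀ y ∈ Set.Icc x₀ (x₀ + dx), |iteratedDeriv 4 f y| ≤ M) :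
    ∀ x ∈ Set.Icc x₀ (x₀ + dx), |f x - T4 f x₀ x| ≤ M * dx ^ 4 := by
  intro x hx
  have hab : x₀ < x₀ + dx := by linarith
  have hM0 : 0 ≤ M := le_trans (abs_nonneg _) (hM x₀ ⟨le_refl _, hab.le⟩)
  have hf' : ContDiffOn ℝ (3 + 1 : ℕ) f (Set.Icc x₀ (x₀ + dx)) := by
    exact_mod_cast hf.mono hsub
  have hb := taylor_mean_remainder_bound (n := 3) hab.le hf' hx (fun y hy => by
    rw [Real.norm_eq_abs, iterWithin_eq f hs hf hab hsub (by norm_num) hy]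
    exact hM y hy)
  have hT : taylorWithinEval f 3 (Set.Icc x₀ (x₀ + dx)) x₀ x = T4 f x₀ x := by
    rw [taylor_within_apply]
    have h0 : x₀ ∈ Set.Icc x₀ (x₀ + dx) := ⟨le_refl _, hab.le⟩
    have e : ∀ k : ℕ, (k : WithTop ℕ∞) ≤ 4 →
        iteratedDerivWithin k f (Set.Icc x₀ (x₀ + dx)) x₀ = iteratedDeriv k f x₀ :=
      fun k hk => iterWithin_eq f hs hf hab hsub hk h0
    simp only [Finset.sum_range_succ, Finset.sum_range_zero, e 0 (by norm_num),
      e 1 (by norm_num), e 2 (by norm_num), e 3 (by norm_num)]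
    simp [T4, Nat.factorial, iteratedDeriv_zero, smul_eq_mul]
    ring
  rw [Real.norm_eq_abs, hT] at hb
  refine hb.trans ?_
  have h1 : (x - x₀) ^ 4 ≤ dx ^ 4 := by
    have := hx.1; have := hx.2
    apply pow_le_pow_left₀ (by linarith) (by linarith)
  have h2 : M * (x - x₀) ^ 4 ≤ M * dx ^ 4 := mul_le_mul_of_nonneg_left h1 hM0
  have h3 : ((Nat.factorial 3 : ℕ) : ℝ) = 6 := by norm_num [Nat.factorial]
  rw [show (3 + 1) = 4 from rfl, h3]
  nlinarith [pow_nonneg (by linarith [hx.1] : (0:ℝ) ≤ x - x₀) 4]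

lemma iterDeriv_mirror (f : ℝ → ℝ) (x₀ : ℝ) (k : ℕ) (t : ℝ) :
    iteratedDeriv k (fun z => f (2 * x₀ - z)) t = (-1 : ℝ) ^ k * iteratedDeriv k f (2 * x₀ - t) := by
  have h : iteratedDeriv k (fun z => f (2 * x₀ - z)) t
      = (-1 : ℝ) ^ k • iteratedDeriv k (fun w => f (2 * x₀ + w)) (-t) := by
    have := iteratedDeriv_comp_neg k (fun w => f (2 * x₀ + w)) t
    simpa [sub_eq_add_neg] using this
  rw [h, iteratedDeriv_comp_const_add]
  simp [smul_eq_mul, sub_eq_add_neg]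

lemma both_bound (f : ℝ → ℝ) {s : Set ℝ} (hs : IsOpen s) (hf : ContDiffOn ℝ 4 f s)
    {x₀ dx M : ℝ} (hdx : 0 < dx) (hsub : Set.Icc (x₀ - dx) (x₀ + dx) ⊆ s)
    (hM : ∀ y ∈ Set.Icc (x₀ - dx) (x₀ + dx), |iteratedDeriv 4 f y| ≤ M) :
    ∀ x ∈ Set.Icc (x₀ - dx) (x₀ + dx), |f x - T4 f x₀ x| ≤ M * dx ^ 4 := by
  intro x hx
  rcases le_or_gt x₀ x with hc | hc
  · exact right_bound f hs hf hdx
      (fun y hy => hsub ⟨by linarith [hy.1], hy.2⟩)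
      (fun y hy => hM y ⟨by linarith [hy.1], hy.2⟩) x ⟨hc, hx.2⟩
  · set g : ℝ → ℝ := fun z => f (2 * x₀ - z) with hg
    set s' : Set ℝ := (fun z => 2 * x₀ - z) ⁻¹' s with hs'
    have hs'o : IsOpen s' := hs.preimage (by continuity)
    have hg4 : ContDiffOn ℝ 4 g s' :=
      hf.comp ((contDiff_const.sub contDiff_id).contDiffOn) (fun z hz => hz)
    have hsub' : Set.Icc x₀ (x₀ + dx) ⊆ s' := by
      intro t ht
      have : (2 * x₀ - t) ∈ Set.Icc (x₀ - dx) (x₀ + dx) :=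
        ⟨by linarith [ht.2], by linarith [ht.1]⟩
      exact hsub this
    have hM' : ∀ y ∈ Set.Icc x₀ (x₀ + dx), |iteratedDeriv 4 g y| ≤ M := by
      intro y hy
      rw [hg, iterDeriv_mirror, show ((-1 : ℝ)) ^ 4 = 1 by norm_num, one_mul]
      exact hM _ ⟨by linarith [hy.2], by linarith [hy.1]⟩
    have key := right_bound g hs'o hg4 hdx hsub' hM' (2 * x₀ - x)
      ⟨by linarith, by linarith [hx.1]⟩
    have harg : 2 * x₀ - x₀ = x₀ := by ring
    have e1 : g (2 * x₀ - x) = f x := by rw [hg]; norm_num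
    have e2 : T4 g x₀ (2 * x₀ - x) = T4 f x₀ x := by
      simp only [T4, hg, iterDeriv_mirror, harg]
      ring
    rwa [e1, e2] at key

lemma T4_continuous (f : ℝ → ℝ) (x₀ : ℝ) : Continuous (T4 f x₀) := by
  unfold T4; fun_prop

lemma integral_T4 (f : ℝ → ℝ) (x₀ dx : ℝ) :
    ∫ ξ in (x₀ - dx)..(x₀ + dx), T4 f x₀ ξ
      = 2 * dx * f x₀ + dx ^ 3 * iteratedDeriv 2 f x₀ / 3 := by
  set c0 := f x₀; set c1 := iteratedDeriv 1 f x₀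
  set c2 := iteratedDeriv 2 f x₀; set c3 := iteratedDeriv 3 f x₀
  have hD : ∀ x : ℝ, HasDerivAt (fun y => c0 * (y - x₀) + c1 * (y - x₀) ^ 2 / 2
      + c2 * (y - x₀) ^ 3 / 6 + c3 * (y - x₀) ^ 4 / 24) (T4 f x₀ x) x := by
    intro x
    have h1 : HasDerivAt (fun y : ℝ => y - x₀) 1 x := (hasDerivAt_id x).sub_const x₀
    have h2 := h1.pow 2
    have h3 := h1.pow 3
    have h4 := h1.pow 4
    have := (((h1.const_mul c0).add ((h2.const_mul c1).div_const 2)).add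
      ((h3.const_mul c2).div_const 6)).add ((h4.const_mul c3).div_const 24)
    convert this using 1
    · rfl
    · rfl
    · funext y; simp only [Pi.add_apply, Pi.pow_apply]
    simp only [T4]
    push_cast
    ring
  rw [intervalIntegral.integral_eq_sub_of_hasDerivAt (fun x _ => hD x)
    ((T4_continuous f x₀).intervalIntegrable _ _)]
  ring

set_option maxHeartbeats 1000000 in
theorem stmt_1 (u : ℝ → ℝ) (x₀ ε : ℝ) (hε : 0 < ε)
    (hu : ContDiffOn ℝ 4 u (Metric.ball x₀ ε)) (lam : ℝ) :
    ∃ C > 0, ∃ δ > 0, ∀ dx : ℝ, 0 < dx → dx < δ →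
      |(1 / 2 + lam ^ 2 * dx ^ 2 / 2 - lam ^ 4 * dx ^ 4 / 12) *
          ((1 / dx) * ∫ ξ in (x₀ - dx)..x₀, u ξ + (1 / dx) * ∫ ξ in x₀..(x₀ + dx), u ξ)
        - u x₀ - dx ^ 2 * (lam ^ 2 * u x₀ + iteratedDeriv 2 u x₀ / 6)| ≤ C * dx ^ 4 := by
  have hso : IsOpen (Metric.ball x₀ ε) := Metric.isOpen_ball
  have hc : ContinuousOn (iteratedDeriv 4 u) (Metric.ball x₀ ε) := by
    have h := hu.continuousOn_iteratedDerivWithin (m := 4) le_rfl hso.uniqueDiffOn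
    exact h.congr (fun y hy => (iterWithin_open_eq u hso 4 hy).symm)
  have hKs : Set.Icc (x₀ - ε/2) (x₀ + ε/2) ⊆ Metric.ball x₀ ε := by
    intro y hy
    rw [Metric.mem_ball, Real.dist_eq, abs_sub_lt_iff]
    constructor <;> [linarith [hy.2]; linarith [hy.1]]
  obtain ⟨M, hM⟩ := isCompact_Icc.exists_bound_of_continuousOn (hc.mono hKs)
  have hM0 : 0 ≤ M := le_trans (norm_nonneg _) (hM x₀ ⟨by linarith, by linarith⟩)
  have hl4 : (0:ℝ) ≤ lam ^ 4 := by positivity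
  set u₂ := iteratedDeriv 2 u x₀ with hu₂
  set A₀ : ℝ := 1/2 + lam^2/2 + lam^4/12 with hA₀
  set Rb : ℝ := lam^4 * |u x₀|/6 + lam^2 * |u₂|/6 + lam^4 * |u₂|/36 with hRb
  refine ⟨A₀ * (2*M) + Rb + 1, by positivity, min (ε/2) 1, by positivity, ?_⟩
  intro dx hdx hdxδ
  have hne : dx ≠ 0 := ne_of_gt hdx
  have hdx1 : dx < 1 := lt_of_lt_of_le hdxδ (min_le_right _ _)
  have hdxε : dx < ε/2 := lt_of_lt_of_le hdxδ (min_le_left _ _)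
  have hsubK : Set.Icc (x₀ - dx) (x₀ + dx) ⊆ Set.Icc (x₀ - ε/2) (x₀ + ε/2) :=
    fun y hy => ⟨by linarith [hy.1], by linarith [hy.2]⟩
  have hsub : Set.Icc (x₀ - dx) (x₀ + dx) ⊆ Metric.ball x₀ ε := hsubK.trans hKs
  have hbb := both_bound u hso hu hdx hsub
    (fun y hy => by rw [← Real.norm_eq_abs]; exact hM y (hsubK hy))
  have hcu : ContinuousOn u (Metric.ball x₀ ε) := hu.continuousOn
  have hil : IntervalIntegrable u MeasureTheory.volume (x₀ - dx) x₀ :=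
    (hcu.mono (by rw [Set.uIcc_of_le (by linarith)]
                  exact (fun y hy => hsub ⟨hy.1, by linarith [hy.2]⟩))).intervalIntegrable
  have hir : IntervalIntegrable u MeasureTheory.volume x₀ (x₀ + dx) :=
    (hcu.mono (by rw [Set.uIcc_of_le (by linarith)]
                  exact (fun y hy => hsub ⟨by linarith [hy.1], hy.2⟩))).intervalIntegrable
  have hib : IntervalIntegrable u MeasureTheory.volume (x₀ - dx) (x₀ + dx) :=
    (hcu.mono (by rw [Set.uIcc_of_le (by linarith)]; exact hsub)).intervalIntegrable
  have hTi : IntervalIntegrable (T4 u x₀) MeasureTheory.volume (x₀ - dx) (x₀ + dx) :=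
    (T4_continuous u x₀).intervalIntegrable _ _
  have hadd : (∫ ξ in (x₀ - dx)..x₀, u ξ) + (∫ ξ in x₀..(x₀ + dx), u ξ)
      = ∫ ξ in (x₀ - dx)..(x₀ + dx), u ξ :=
    intervalIntegral.integral_add_adjacent_intervals hil hir
  have hsum : (1 / dx * ∫ ξ in (x₀ - dx)..x₀, u ξ + (1 / dx) * ∫ ξ in x₀..(x₀ + dx), u ξ)
      = (1/dx) * ∫ ξ in (x₀ - dx)..(x₀ + dx), u ξ := by
    rw [intervalIntegral.integral_add hil intervalIntegrable_const,
      intervalIntegral.integral_const, ← hadd, smul_eq_mul,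
      show x₀ - (x₀ - dx) = dx by ring]
    field_simp
  rw [hsum]
  set I := ∫ ξ in (x₀ - dx)..(x₀ + dx), u ξ with hI
  set E := I - (2 * dx * u x₀ + dx ^ 3 * u₂ / 3) with hE
  have hEb : |E| ≤ 2 * (M * dx ^ 4) * dx := by
    rw [hE, hI, ← integral_T4 u x₀ dx, ← intervalIntegral.integral_sub hib hTi]
    have hnb := intervalIntegral.norm_integral_le_of_norm_le_const
      (C := M * dx ^ 4) (a := x₀ - dx) (b := x₀ + dx)
      (f := fun ξ => u ξ - T4 u x₀ ξ) (fun y hy => by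
        rw [Real.norm_eq_abs]
        refine hbb y ?_
        rw [Set.uIoc_of_le (by linarith)] at hy
        exact ⟨hy.1.le, hy.2⟩)
    rw [Real.norm_eq_abs] at hnb
    refine hnb.trans ?_
    rw [show x₀ + dx - (x₀ - dx) = 2 * dx by ring, abs_of_pos (by linarith)]
    ring_nf
    exact le_refl _
  set A : ℝ := 1 / 2 + lam ^ 2 * dx ^ 2 / 2 - lam ^ 4 * dx ^ 4 / 12 with hA
  set R : ℝ := -(lam^4 * u x₀)/6 + lam^2 * u₂/6 + -(lam^4 * dx^2 * u₂)/36 with hR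
  have hP : (1/dx) * (2 * dx * u x₀ + dx ^ 3 * u₂ / 3) = 2 * u x₀ + dx ^ 2 * u₂ / 3 := by
    field_simp
  have hkey : A * ((1/dx) * I) - u x₀ - dx ^ 2 * (lam ^ 2 * u x₀ + u₂ / 6)
      = A * ((1/dx) * E) + dx ^ 4 * R := by
    rw [hE, hA, hR]
    linear_combination (1/2 + lam ^ 2 * dx ^ 2 / 2 - lam ^ 4 * dx ^ 4 / 12) * hP
  rw [hkey]
  have hdx2 : dx ^ 2 ≤ 1 := by nlinarith
  have hdx4 : dx ^ 4 ≤ 1 := by nlinarith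
  have hAb : |A| ≤ A₀ := by
    have f1 := mul_le_mul_of_nonneg_left hdx2 (sq_nonneg lam)
    have f2 := mul_le_mul_of_nonneg_left hdx4 hl4
    have f3 : (0:ℝ) ≤ lam^4 * dx^4 := by positivity
    have f4 : (0:ℝ) ≤ lam^2 * dx^2 := by positivity
    rw [hA, hA₀, abs_le]
    constructor <;> nlinarith
  have hAE : |A * ((1/dx) * E)| ≤ A₀ * (2*M) * dx ^ 4 := by
    rw [abs_mul, abs_mul, abs_of_pos (show (0:ℝ) < 1/dx by positivity)]
    calc |A| * (1/dx * |E|) ≤ A₀ * (1/dx * (2 * (M * dx ^ 4) * dx)) := by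
          have hA₀0 : 0 ≤ A₀ := le_trans (abs_nonneg _) hAb
          have h1 : 1/dx * |E| ≤ 1/dx * (2 * (M * dx ^ 4) * dx) :=
            mul_le_mul_of_nonneg_left hEb (by positivity)
          exact mul_le_mul hAb h1 (by positivity) hA₀0
      _ = A₀ * (2*M) * dx ^ 4 := by field_simp
  have hRb' : |dx ^ 4 * R| ≤ Rb * dx ^ 4 := by
    rw [abs_mul, abs_of_nonneg (by positivity : (0:ℝ) ≤ dx ^ 4)]
    have hRle : |R| ≤ Rb := by
      have ht := abs_add_three (-(lam^4 * u x₀)/6) (lam^2 * u₂/6) (-(lam^4 * dx^2 * u₂)/36)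
      have e1 : |(-(lam^4 * u x₀)/6)| = lam^4 * |u x₀|/6 := by
        rw [abs_div, abs_neg, abs_mul, abs_of_nonneg hl4]; norm_num
      have e2 : |lam^2 * u₂/6| = lam^2 * |u₂|/6 := by
        rw [abs_div, abs_mul, abs_of_nonneg (sq_nonneg lam)]; norm_num
      have e3 : |(-(lam^4 * dx^2 * u₂)/36)| ≤ lam^4 * |u₂|/36 := by
        rw [abs_div, abs_neg, abs_mul, abs_mul, abs_of_nonneg hl4,
          abs_of_nonneg (sq_nonneg dx)]
        have : lam^4 * dx^2 * |u₂| ≤ lam^4 * 1 * |u₂| := by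
          apply mul_le_mul_of_nonneg_right _ (abs_nonneg _)
          exact mul_le_mul_of_nonneg_left hdx2 hl4
        rw [show |(36:ℝ)| = 36 by norm_num]
        linarith
      rw [hR]
      calc |(-(lam^4 * u x₀)/6) + lam^2 * u₂/6 + (-(lam^4 * dx^2 * u₂)/36)|
          ≤ |(-(lam^4 * u x₀)/6)| + |lam^2 * u₂/6| + |(-(lam^4 * dx^2 * u₂)/36)| := ht
        _ ≤ Rb := by rw [hRb, e1, e2]; linarith
    calc dx ^ 4 * |R| ≤ dx ^ 4 * Rb :=
          mul_le_mul_of_nonneg_left hRle (by positivity)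
      _ = Rb * dx ^ 4 := by ring
  calc |A * ((1/dx) * E) + dx ^ 4 * R| ≤ |A * ((1/dx) * E)| + |dx ^ 4 * R| := abs_add_le _ _
    _ ≤ A₀ * (2*M) * dx ^ 4 + Rb * dx ^ 4 := add_le_add hAE hRb'
    _ ≤ (A₀ * (2*M) + Rb + 1) * dx ^ 4 := by nlinarith [pow_nonneg hdx.le 4]
end

section
/- Let u : ℝ → ℝ be C⁴ near x₀ with u(x₀) ≠ 0 and u''(x₀)·u(x₀) < 0 (so that λ² := −u''(x₀)/(6u(x₀)) > 0 is well defined). With cell averages ū₋, ū₊ over [x₀−Δx, x₀] and [x₀, x₀+Δx] as before, the reconstruction R(Δx) = 2λ²Δx²e^{3λ²Δx²}/(e^{4λ²Δx²}−1) · (ū₋ + ū₊) with λ² = −u''(x₀)/(6u(x₀)) satisfies R(Δx) = u(x₀) + O(Δx⁴) as Δx → 0. -/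
open Real intervalIntegral Set

lemma iterDW_of_isOpen {f : ℝ → ℝ} {O : Set ℝ} {n : ℕ} (hO : IsOpen O) {x : ℝ} (hx : x ∈ O) :
    iteratedDerivWithin n f O x = iteratedDeriv n f x := by
  rw [iteratedDerivWithin_eq_iteratedFDerivWithin, iteratedDeriv_eq_iteratedFDeriv,
    iteratedFDerivWithin_of_isOpen n hO hx]

lemma iterDW_eq_iterD {f : ℝ → ℝ} {O s : Set ℝ} {n : ℕ} (hO : IsOpen O) (hsO : s ⊆ O)
    (hs : UniqueDiffOn ℝ s) (hf : ContDiffOn ℝ n f O) :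
    ∀ m : ℕ, m ≤ n → ∀ x ∈ s, iteratedDerivWithin m f s x = iteratedDeriv m f x := by
  intro m
  induction m with
  | zero => intro _ x hx; simp
  | succ m ih =>
    intro hm x hx
    have hmn : m < n := lt_of_lt_of_le (Nat.lt_succ_self m) hm
    have hx' : x ∈ O := hsO hx
    have hdA : DifferentiableOn ℝ (iteratedDerivWithin m f O) O :=
      hf.differentiableOn_iteratedDerivWithin (by exact_mod_cast hmn) hO.uniqueDiffOn
    have hevent : iteratedDeriv m f =ᶠ[nhds x] iteratedDerivWithin m f O := by
      filter_upwards [hO.mem_nhds hx'] with y hy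
      exact (iterDW_of_isOpen hO hy).symm
    have hdiff : DifferentiableAt ℝ (iteratedDeriv m f) x :=
      hevent.differentiableAt_iff.mpr ((hdA x hx').differentiableAt (hO.mem_nhds hx'))
    rw [iteratedDerivWithin_succ,
      derivWithin_congr (fun y hy => ih (le_of_lt hmn) y hy) (ih (le_of_lt hmn) x hx),
      hdiff.derivWithin (hs x hx)]
    exact (congrFun (iteratedDeriv_succ) x).symm

lemma taylor4_bound {u : ℝ → ℝ} {x₀ ε : ℝ} (hε : 0 < ε)
    (hu : ContDiffOn ℝ 4 u (Metric.ball x₀ ε)) :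
    ∃ M, 0 ≤ M ∧ ∀ ξ ∈ Icc (x₀ - ε/2) (x₀ + ε/2),
      |u ξ - (u x₀ + iteratedDeriv 1 u x₀ * (ξ - x₀) + iteratedDeriv 2 u x₀ / 2 * (ξ - x₀)^2
        + iteratedDeriv 3 u x₀ / 6 * (ξ - x₀)^3)| ≤ M * (ξ - x₀)^4 := by
  set r := ε/2 with hr
  have hrpos : 0 < r := by positivity
  have hball : IsOpen (Metric.ball x₀ ε) := Metric.isOpen_ball
  have hsub : Icc (x₀ - r) (x₀ + r) ⊆ Metric.ball x₀ ε := by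
    intro y hy
    rw [Metric.mem_ball, Real.dist_eq, abs_lt]
    constructor <;> [linarith [hy.1]; linarith [hy.2]]
  -- bound on the 4th derivative
  have hg : ContinuousOn (iteratedDeriv 4 u) (Icc (x₀ - r) (x₀ + r)) := by
    have h1 : ContinuousOn (iteratedDerivWithin 4 u (Metric.ball x₀ ε)) (Metric.ball x₀ ε) :=
      hu.continuousOn_iteratedDerivWithin le_rfl hball.uniqueDiffOn
    have h2 : ContinuousOn (iteratedDeriv 4 u) (Metric.ball x₀ ε) := by
      apply h1.congr
      intro y hy
      exact (iterDW_of_isOpen hball hy).symm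
    exact h2.mono hsub
  obtain ⟨M0, hM0⟩ := isCompact_Icc.exists_bound_of_continuousOn hg
  set M := max M0 0 with hM
  have hMnn : 0 ≤ M := le_max_right _ _
  have hM4 : ∀ y ∈ Icc (x₀ - r) (x₀ + r), |iteratedDeriv 4 u y| ≤ M :=
    fun y hy => le_trans (hM0 y hy) (le_max_left _ _)
  refine ⟨M/6, by positivity, ?_⟩
  intro ξ hξ
  have hx₀mem : x₀ ∈ Icc (x₀ - r) (x₀ + r) := by
    constructor <;> linarith
  have hIccR : Icc x₀ (x₀ + r) ⊆ Icc (x₀ - r) (x₀ + r) := Icc_subset_Icc (by linarith) le_rfl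
  have huIcc : UniqueDiffOn ℝ (Icc x₀ (x₀ + r)) := uniqueDiffOn_Icc (by linarith)
  -- Taylor polynomial identification helper
  have hder : ∀ m : ℕ, m ≤ 4 → ∀ x ∈ Icc x₀ (x₀ + r),
      iteratedDerivWithin m u (Icc x₀ (x₀ + r)) x = iteratedDeriv m u x :=
    iterDW_eq_iterD hball (fun y hy => hsub (hIccR hy)) huIcc hu
  rcases le_or_gt x₀ ξ with hcase | hcase
  · -- right side
    have hξmem : ξ ∈ Icc x₀ (x₀ + r) := ⟨hcase, hξ.2⟩
    have hbd := taylor_mean_remainder_bound (f := u) (a := x₀) (b := x₀ + r) (C := M) (n := 3)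
      (by linarith) (hu.mono (fun y hy => hsub (hIccR hy))) hξmem
      (fun y hy => by
        rw [Real.norm_eq_abs, hder 4 le_rfl y hy]
        exact hM4 y (hIccR hy))
    rw [taylor_within_apply] at hbd
    have hx0 : x₀ ∈ Icc x₀ (x₀ + r) := ⟨le_rfl, by linarith⟩
    have hsum : ∑ k ∈ Finset.range (3+1), (((k.factorial : ℝ))⁻¹ * (ξ - x₀) ^ k) •
        iteratedDerivWithin k u (Icc x₀ (x₀ + r)) x₀
        = u x₀ + iteratedDeriv 1 u x₀ * (ξ - x₀) + iteratedDeriv 2 u x₀ / 2 * (ξ - x₀)^2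
          + iteratedDeriv 3 u x₀ / 6 * (ξ - x₀)^3 := by
      rw [Finset.sum_range_succ, Finset.sum_range_succ, Finset.sum_range_succ,
        Finset.sum_range_succ, Finset.sum_range_zero,
        hder 0 (by norm_num) x₀ hx0, hder 1 (by norm_num) x₀ hx0,
        hder 2 (by norm_num) x₀ hx0, hder 3 (by norm_num) x₀ hx0]
      simp [Nat.factorial, smul_eq_mul]
      ring
    rw [hsum, Real.norm_eq_abs] at hbd
    refine hbd.trans (le_of_eq ?_)
    rw [show ((3:ℕ).factorial : ℝ) = 6 by norm_num [Nat.factorial]]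
    ring
  · -- left side, via reflection
    set v : ℝ → ℝ := fun s => u (2*x₀ - s) with hv
    have hvd : ∀ (k : ℕ) (y : ℝ), iteratedDeriv k v y = (-1:ℝ)^k • iteratedDeriv k u (2*x₀ - y) := by
      intro k y
      have h1 : v = fun s => (fun t => u (2*x₀ + t)) (-s) := by
        funext s; simp [hv, sub_eq_add_neg]
      rw [h1]
      beta_reduce
      have h2 : iteratedDeriv k (fun s => u (2*x₀ + -s)) y
          = (-1:ℝ)^k • iteratedDeriv k (fun t => u (2*x₀ + t)) (-y) :=
        iteratedDeriv_comp_neg k (fun t => u (2*x₀ + t)) y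
      rw [h2, iteratedDeriv_comp_const_add]
      beta_reduce
      rw [sub_eq_add_neg]
    have hvC : ContDiffOn ℝ 4 v (Metric.ball x₀ ε) := by
      intro y hy
      have hy' : 2*x₀ - y ∈ Metric.ball x₀ ε := by
        rw [Metric.mem_ball, Real.dist_eq] at hy ⊢
        rw [show 2*x₀ - y - x₀ = -(y - x₀) by ring, abs_neg]
        exact hy
      have := (hu.contDiffAt (hball.mem_nhds hy')).comp y
        ((contDiffAt_const (c := 2*x₀)).sub contDiffAt_id)
      exact this.contDiffWithinAt
    have hderv : ∀ m : ℕ, m ≤ 4 → ∀ x ∈ Icc x₀ (x₀ + r),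
        iteratedDerivWithin m v (Icc x₀ (x₀ + r)) x = iteratedDeriv m v x :=
      iterDW_eq_iterD hball (fun y hy => hsub (hIccR hy)) huIcc hvC
    set η := 2*x₀ - ξ with hη
    have hηmem : η ∈ Icc x₀ (x₀ + r) := by
      constructor
      · simp only [hη]; linarith
      · simp only [hη]; linarith [hξ.1]
    have hbd := taylor_mean_remainder_bound (f := v) (a := x₀) (b := x₀ + r) (C := M) (n := 3)
      (by linarith) (hvC.mono (fun y hy => hsub (hIccR hy))) hηmem
      (fun y hy => by
        rw [Real.norm_eq_abs, hderv 4 le_rfl y hy, hvd 4 y, smul_eq_mul,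
          show ((-1:ℝ))^4 = 1 by norm_num, one_mul]
        have hmem : 2*x₀ - y ∈ Icc (x₀ - r) (x₀ + r) := by
          constructor
          · linarith [hy.2]
          · linarith [hy.1]
        exact hM4 _ hmem)
    rw [taylor_within_apply] at hbd
    have hx0 : x₀ ∈ Icc x₀ (x₀ + r) := ⟨le_rfl, by linarith⟩
    have hsum : ∑ k ∈ Finset.range (3+1), (((k.factorial : ℝ))⁻¹ * (η - x₀) ^ k) •
        iteratedDerivWithin k v (Icc x₀ (x₀ + r)) x₀
        = u x₀ + iteratedDeriv 1 u x₀ * (ξ - x₀) + iteratedDeriv 2 u x₀ / 2 * (ξ - x₀)^2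
          + iteratedDeriv 3 u x₀ / 6 * (ξ - x₀)^3 := by
      rw [Finset.sum_range_succ, Finset.sum_range_succ, Finset.sum_range_succ,
        Finset.sum_range_succ, Finset.sum_range_zero,
        hderv 0 (by norm_num) x₀ hx0, hderv 1 (by norm_num) x₀ hx0,
        hderv 2 (by norm_num) x₀ hx0, hderv 3 (by norm_num) x₀ hx0,
        hvd 0 x₀, hvd 1 x₀, hvd 2 x₀, hvd 3 x₀,
        show 2*x₀ - x₀ = x₀ by ring]
      have h0 : iteratedDeriv 0 u x₀ = u x₀ := rfl
      simp only [hη, Nat.factorial, smul_eq_mul, h0]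
      push_cast
      ring
    have hvη : v η = u ξ := by
      simp only [hv, hη]
      norm_num
    have hpow : (η - x₀)^(3+1) = (ξ - x₀)^4 := by
      simp only [hη]
      ring
    rw [hsum, hvη, Real.norm_eq_abs, hpow] at hbd
    refine hbd.trans (le_of_eq ?_)
    rw [show ((3:ℕ).factorial : ℝ) = 6 by norm_num [Nat.factorial]]
    ring

lemma Kbound {t : ℝ} (ht : 0 < t) (ht4 : t ≤ 1/4) :
    |2*t*Real.exp (3*t)/(Real.exp (4*t) - 1) - (1/2 + t/2)| ≤ 7*t^2 := by
  have hD : 4*t ≤ Real.exp (4*t) - 1 := by linarith [Real.add_one_le_exp (4*t)]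
  have hDpos : (0:ℝ) < Real.exp (4*t) - 1 := lt_of_lt_of_le (by linarith) hD
  have hE : |Real.exp (3*t) - (1 + 3*t)| ≤ (27/4)*t^2 := by
    have h := Real.exp_bound (x := 3*t) (by rw [abs_of_nonneg (by linarith)]; linarith) (n := 2) (by norm_num)
    have hs : ∑ i ∈ Finset.range 2, (3*t) ^ i / (Nat.factorial i : ℝ) = 1 + 3*t := by
      simp [Finset.sum_range_succ]
    rw [hs] at h
    refine h.trans (le_of_eq ?_)
    rw [abs_of_nonneg (by linarith : (0:ℝ) ≤ 3*t)]
    norm_num [Nat.factorial]; ring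
  have hE' : |Real.exp (4*t) - (1 + 4*t + 8*t^2)| ≤ (128/9)*t^3 := by
    have h := Real.exp_bound (x := 4*t) (by rw [abs_of_nonneg (by linarith)]; linarith) (n := 3) (by norm_num)
    have hs : ∑ i ∈ Finset.range 3, (4*t) ^ i / (Nat.factorial i : ℝ) = 1 + 4*t + 8*t^2 := by
      simp [Finset.sum_range_succ]; ring
    rw [hs] at h
    refine h.trans (le_of_eq ?_)
    rw [abs_of_nonneg (by linarith : (0:ℝ) ≤ 4*t)]
    norm_num [Nat.factorial]; ring
  have hnum : |2*t*Real.exp (3*t) - (1/2 + t/2)*(Real.exp (4*t) - 1)| ≤ 27*t^3 := by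
    have key : 2*t*Real.exp (3*t) - (1/2 + t/2)*(Real.exp (4*t) - 1)
        = 2*t*(Real.exp (3*t) - (1 + 3*t)) - 4*t^3 - (1/2 + t/2)*(Real.exp (4*t) - (1 + 4*t + 8*t^2)) := by
      ring
    rw [key]
    have h1 : |2*t*(Real.exp (3*t) - (1 + 3*t))| ≤ (27/2)*t^3 := by
      rw [abs_mul, abs_of_nonneg (by linarith : (0:ℝ) ≤ 2*t)]
      calc 2*t*|Real.exp (3*t) - (1 + 3*t)| ≤ 2*t*((27/4)*t^2) := by
            apply mul_le_mul_of_nonneg_left hE (by linarith)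
        _ = (27/2)*t^3 := by ring
    have h2 : |(1/2 + t/2)*(Real.exp (4*t) - (1 + 4*t + 8*t^2))| ≤ (80/9)*t^3 := by
      rw [abs_mul, abs_of_nonneg (by linarith : (0:ℝ) ≤ 1/2 + t/2)]
      calc (1/2 + t/2)*|Real.exp (4*t) - (1 + 4*t + 8*t^2)| ≤ (5/8)*((128/9)*t^3) := by
            apply mul_le_mul (by linarith) hE' (abs_nonneg _) (by norm_num)
        _ = (80/9)*t^3 := by ring
    calc |2*t*(Real.exp (3*t) - (1 + 3*t)) - 4*t^3 - (1/2 + t/2)*(Real.exp (4*t) - (1 + 4*t + 8*t^2))|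
        ≤ |2*t*(Real.exp (3*t) - (1 + 3*t)) - 4*t^3| + |(1/2 + t/2)*(Real.exp (4*t) - (1 + 4*t + 8*t^2))| :=
          abs_sub _ _
      _ ≤ |2*t*(Real.exp (3*t) - (1 + 3*t))| + |4*t^3| + |(1/2 + t/2)*(Real.exp (4*t) - (1 + 4*t + 8*t^2))| := by
          linarith [abs_sub (2*t*(Real.exp (3*t) - (1 + 3*t))) (4*t^3)]
      _ ≤ (27/2)*t^3 + 4*t^3 + (80/9)*t^3 := by
          have : |4*t^3| = 4*t^3 := abs_of_nonneg (by positivity)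
          linarith
      _ ≤ 27*t^3 := by nlinarith [pow_pos ht 3]
  have hrw : 2*t*Real.exp (3*t)/(Real.exp (4*t) - 1) - (1/2 + t/2)
      = (2*t*Real.exp (3*t) - (1/2 + t/2)*(Real.exp (4*t) - 1))/(Real.exp (4*t) - 1) := by
    rw [eq_div_iff hDpos.ne', sub_mul, div_mul_cancel₀ _ hDpos.ne']
  rw [hrw, abs_div, abs_of_pos hDpos]
  calc |2*t*Real.exp (3*t) - (1/2 + t/2)*(Real.exp (4*t) - 1)|/(Real.exp (4*t) - 1)
      ≤ (27*t^3)/(4*t) := div_le_div₀ (by positivity) hnum (by linarith) hD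
    _ = (27/4)*t^2 := by field_simp
    _ ≤ 7*t^2 := by nlinarith [sq_nonneg t]

set_option maxHeartbeats 2000000 in
theorem stmt_2 (u : ℝ → ℝ) (x₀ ε : ℝ) (hε : 0 < ε)
    (hu : ContDiffOn ℝ 4 u (Metric.ball x₀ ε))
    (hu0 : u x₀ ≠ 0) (hsign : iteratedDeriv 2 u x₀ * u x₀ < 0) :
    ∃ C > 0, ∃ δ > 0, ∀ dx : ℝ, 0 < dx → dx < δ →
      |(2 * (-iteratedDeriv 2 u x₀ / (6 * u x₀)) * dx ^ 2 *
            Real.exp (3 * (-iteratedDeriv 2 u x₀ / (6 * u x₀)) * dx ^ 2) /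
            (Real.exp (4 * (-iteratedDeriv 2 u x₀ / (6 * u x₀)) * dx ^ 2) - 1)) *
          ((1 / dx) * ∫ ξ in (x₀ - dx)..x₀, u ξ + (1 / dx) * ∫ ξ in x₀..(x₀ + dx), u ξ)
        - u x₀| ≤ C * dx ^ 4 := by
  obtain ⟨M, hMnn, htay⟩ := taylor4_bound hε hu
  set a := -iteratedDeriv 2 u x₀ / (6 * u x₀) with ha
  set u2 := iteratedDeriv 2 u x₀ with hu2
  have hapos : 0 < a := by
    rw [ha]
    rcases lt_or_gt_of_ne hu0 with h | h
    · have h2 : 0 < u2 := by nlinarith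
      exact div_pos_of_neg_of_neg (by linarith) (by linarith)
    · have h2 : u2 < 0 := by nlinarith
      exact div_pos (by linarith) (by linarith)
  set B := 2*|u x₀| + |u2|/3 + 2*M + 1 with hB
  have hBpos : 0 < B := by
    have := abs_nonneg (u x₀); have := abs_nonneg u2; rw [hB]; linarith
  set C := 7*a^2*B + 2*M + a*|u2|/6 + 1 with hC
  clear_value a u2 B C
  have hCpos : 0 < C := by
    have h1 : 0 ≤ 7*a^2*B := by positivity
    have h2 : 0 ≤ a*|u2|/6 := by positivity
    rw [hC]; linarith
  have hane : a ≠ 0 := ne_of_gt hapos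
  refine ⟨C, hCpos, min (min 1 (1/(4*a))) (ε/2), lt_min (lt_min one_pos (by positivity)) (by positivity), ?_⟩
  intro dx hdx hdxδ
  have hdx1 : dx ≤ 1 := le_of_lt (lt_of_lt_of_le hdxδ ((min_le_left _ _).trans (min_le_left _ _)))
  have hdx4a : dx ≤ 1/(4*a) := le_of_lt (lt_of_lt_of_le hdxδ ((min_le_left _ _).trans (min_le_right _ _)))
  have hdxr : dx ≤ ε/2 := le_of_lt (lt_of_lt_of_le hdxδ (min_le_right _ _))
  set t := a * dx^2 with ht
  have htpos : 0 < t := by rw [ht]; exact mul_pos hapos (by positivity)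
  have ht4 : t ≤ 1/4 := by
    rw [ht]
    have hdd : dx*dx ≤ dx*1 := mul_le_mul_of_nonneg_left hdx1 hdx.le
    have h1' : dx^2 ≤ dx := by rw [pow_two]; linarith
    have h1 : a * dx^2 ≤ a * dx := mul_le_mul_of_nonneg_left h1' hapos.le
    have h2 : a * dx ≤ 1/4 := by
      have := mul_le_mul_of_nonneg_left hdx4a hapos.le
      calc a * dx ≤ a * (1/(4*a)) := this
        _ = 1/4 := by
            rw [one_div, mul_inv_rev, ← mul_assoc, mul_inv_cancel₀ hane, one_div]
            norm_num
    linarith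
  have hK := Kbound htpos ht4
  -- continuity / integrability
  have hcball : ContinuousOn u (Metric.ball x₀ ε) := hu.continuousOn
  have hIccball : Icc (x₀ - dx) (x₀ + dx) ⊆ Metric.ball x₀ ε := by
    intro y hy
    rw [Metric.mem_ball, Real.dist_eq, abs_lt]
    constructor
    · linarith [hy.1]
    · linarith [hy.2]
  have hint1 : IntervalIntegrable u MeasureTheory.volume (x₀ - dx) x₀ := by
    apply ContinuousOn.intervalIntegrable
    rw [uIcc_of_le (by linarith)]
    exact hcball.mono (fun y hy => hIccball ⟨hy.1, by linarith [hy.2]⟩)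
  have hint2 : IntervalIntegrable u MeasureTheory.volume x₀ (x₀ + dx) := by
    apply ContinuousOn.intervalIntegrable
    rw [uIcc_of_le (by linarith)]
    exact hcball.mono (fun y hy => hIccball ⟨by linarith [hy.1], hy.2⟩)
  have hintu : IntervalIntegrable u MeasureTheory.volume (x₀ - dx) (x₀ + dx) := by
    apply ContinuousOn.intervalIntegrable
    rw [uIcc_of_le (by linarith)]
    exact hcball.mono hIccball
  have hsplit : (∫ ξ in (x₀ - dx)..x₀, u ξ) + ∫ ξ in x₀..(x₀ + dx), u ξ
      = ∫ ξ in (x₀ - dx)..(x₀ + dx), u ξ :=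
    integral_add_adjacent_intervals hint1 hint2
  have hdxne : dx ≠ 0 := ne_of_gt hdx
  have hinv : dx * (1/dx) = 1 := by rw [one_div]; exact mul_inv_cancel₀ hdxne
  have hcomb : (∫ ξ in (x₀ - dx)..x₀, (u ξ + 1/dx * ∫ ξ in x₀..(x₀+dx), u ξ))
      = (∫ ξ in (x₀ - dx)..x₀, u ξ) + (x₀ - (x₀ - dx)) • (1/dx * ∫ ξ in x₀..(x₀+dx), u ξ) := by
    rw [integral_add hint1 intervalIntegrable_const, integral_const]
  rw [hcomb, smul_eq_mul]
  have heq2 : (∫ ξ in (x₀ - dx)..x₀, u ξ) + (x₀ - (x₀ - dx)) * (1/dx * ∫ ξ in x₀..(x₀+dx), u ξ)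
      = ∫ ξ in (x₀ - dx)..(x₀ + dx), u ξ := by
    rw [← hsplit, show x₀ - (x₀ - dx) = dx by ring]
    linear_combination (∫ ξ in x₀..(x₀+dx), u ξ) * hinv
  rw [heq2]
  set I := ∫ ξ in (x₀ - dx)..(x₀ + dx), u ξ with hI
  clear_value I
  set P : ℝ → ℝ := fun ξ => u x₀ + iteratedDeriv 1 u x₀*(ξ-x₀) + u2/2*(ξ-x₀)^2
    + iteratedDeriv 3 u x₀/6*(ξ-x₀)^3 with hP
  have hPc : Continuous P := by rw [hP]; fun_prop
  have hintP : IntervalIntegrable P MeasureTheory.volume (x₀ - dx) (x₀ + dx) :=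
    hPc.intervalIntegrable _ _
  -- integral of the Taylor polynomial
  have hQ : ∀ ξ : ℝ, HasDerivAt (fun x => u x₀*(x-x₀) + iteratedDeriv 1 u x₀/2*(x-x₀)^2
      + u2/6*(x-x₀)^3 + iteratedDeriv 3 u x₀/24*(x-x₀)^4) (P ξ) ξ := by
    intro ξ
    have h1 : HasDerivAt (fun x : ℝ => x - x₀) 1 ξ := (hasDerivAt_id ξ).sub_const x₀
    have h2 := h1.pow 2
    have h3 := h1.pow 3
    have h4 := h1.pow 4
    have h5 := (((h1.const_mul (u x₀)).add (h2.const_mul (iteratedDeriv 1 u x₀/2))).add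
      (h3.const_mul (u2/6))).add (h4.const_mul (iteratedDeriv 3 u x₀/24))
    refine h5.congr_deriv ?_
    rw [hP]
    norm_num
    ring
  have hIP : (∫ ξ in (x₀ - dx)..(x₀ + dx), P ξ) = 2*(u x₀)*dx + u2/3*dx^3 := by
    rw [integral_eq_sub_of_hasDerivAt (fun ξ _ => hQ ξ) hintP]
    ring
  -- remainder bound
  have hRem : |I - (2*(u x₀)*dx + u2/3*dx^3)| ≤ M*dx^4*(2*dx) := by
    have hsub2 : (∫ ξ in (x₀ - dx)..(x₀ + dx), (u ξ - P ξ))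
        = I - ∫ ξ in (x₀ - dx)..(x₀ + dx), P ξ := by
      rw [hI]; exact integral_sub hintu hintP
    have hnorm : ‖∫ ξ in (x₀ - dx)..(x₀ + dx), (u ξ - P ξ)‖ ≤ M*dx^4 * |(x₀ + dx) - (x₀ - dx)| := by
      apply intervalIntegral.norm_integral_le_of_norm_le_const
      intro ξ hξ
      rw [uIoc_of_le (by linarith)] at hξ
      have hξ1 : x₀ - dx ≤ ξ := le_of_lt hξ.1
      have hξ2 : ξ ≤ x₀ + dx := hξ.2
      have hmem : ξ ∈ Icc (x₀ - ε/2) (x₀ + ε/2) := ⟨by linarith, by linarith⟩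
      have hb := htay ξ hmem
      have hsq : (ξ - x₀)^2 ≤ dx^2 := sq_le_sq' (by linarith) (by linarith)
      have hp4 : (ξ - x₀)^4 ≤ dx^4 := by
        have h := pow_le_pow_left₀ (sq_nonneg (ξ - x₀)) hsq 2
        calc (ξ - x₀)^4 = ((ξ - x₀)^2)^2 := by ring
          _ ≤ (dx^2)^2 := h
          _ = dx^4 := by ring
      rw [Real.norm_eq_abs]
      simp only [hP]
      calc |u ξ - (u x₀ + iteratedDeriv 1 u x₀*(ξ-x₀) + u2/2*(ξ-x₀)^2
          + iteratedDeriv 3 u x₀/6*(ξ-x₀)^3)| ≤ M*(ξ - x₀)^4 := hb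
        _ ≤ M*dx^4 := mul_le_mul_of_nonneg_left hp4 hMnn
    rw [hsub2, hIP] at hnorm
    rw [show |(x₀ + dx) - (x₀ - dx)| = 2*dx by rw [abs_of_nonneg (by linarith)]; ring] at hnorm
    exact hnorm
  -- the average bound
  have hS : |1/dx * I - (2*(u x₀) + u2/3*dx^2)| ≤ 2*M*dx^4 := by
    have hfd : 1/dx * I - (2*(u x₀) + u2/3*dx^2) = (1/dx)*(I - (2*(u x₀)*dx + u2/3*dx^3)) := by
      linear_combination (2*(u x₀) + u2/3*dx^2) * hinv
    rw [hfd, abs_mul, abs_of_pos (by positivity : (0:ℝ) < 1/dx)]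
    calc 1/dx * |I - (2*(u x₀)*dx + u2/3*dx^3)| ≤ 1/dx * (M*dx^4*(2*dx)) := by
          apply mul_le_mul_of_nonneg_left hRem (by positivity)
      _ = 2*M*dx^4 := by linear_combination (2*M*dx^4) * hinv
  -- rewrite the K coefficient in terms of t
  rw [show 2 * a * dx ^ 2 = 2*t by rw [ht]; ring, show 3 * a * dx ^ 2 = 3*t by rw [ht]; ring,
    show 4 * a * dx ^ 2 = 4*t by rw [ht]; ring]
  set Kv := 2*t*Real.exp (3*t)/(Real.exp (4*t) - 1) with hKv
  set Sv := 1/dx * I with hSv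
  set S0 := 2*(u x₀) + u2/3*dx^2 with hS0
  -- bound |Sv|
  have hS0b : |S0| ≤ 2*|u x₀| + |u2|/3*dx^2 := by
    rw [hS0]
    calc |2*(u x₀) + u2/3*dx^2| ≤ |2*(u x₀)| + |u2/3*dx^2| := abs_add_le _ _
      _ = 2*|u x₀| + |u2|/3*dx^2 := by
          rw [abs_mul, abs_mul, abs_div, abs_of_nonneg (by positivity : (0:ℝ) ≤ dx^2)]
          norm_num
  have hdx2 : dx^2 ≤ 1 := pow_le_one₀ hdx.le hdx1
  have hdx4 : dx^4 ≤ 1 := pow_le_one₀ hdx.le hdx1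
  have hSB : |Sv| ≤ B := by
    have h1 : |Sv| ≤ |S0| + |Sv - S0| := by
      calc |Sv| = |S0 + (Sv - S0)| := by ring_nf
        _ ≤ |S0| + |Sv - S0| := abs_add_le _ _
    have h2 : |u2|/3*dx^2 ≤ |u2|/3 := by
      have h := mul_le_mul_of_nonneg_left hdx2 (by positivity : (0:ℝ) ≤ |u2|/3)
      linarith
    have h3 : 2*M*dx^4 ≤ 2*M := by
      have h := mul_le_mul_of_nonneg_left hdx4 (by linarith : (0:ℝ) ≤ 2*M)
      linarith
    rw [hB]
    linarith [hS]
  -- key algebraic identity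
  have hau0 : a * u x₀ = -u2/6 := by
    rw [ha]
    field_simp
  have hK0S0 : (1/2 + t/2)*S0 = u x₀ + a*u2/6*dx^4 := by
    rw [hS0, ht]
    linear_combination dx^2 * hau0
  have key : Kv*Sv - u x₀ = (Kv - (1/2 + t/2))*Sv + (1/2 + t/2)*(Sv - S0) + a*u2/6*dx^4 := by
    linear_combination hK0S0
  rw [key]
  have hZ : |a*u2/6*dx^4| = a*|u2|/6*dx^4 := by
    rw [abs_mul, abs_div, abs_mul, abs_of_pos hapos,
      abs_of_nonneg (by positivity : (0:ℝ) ≤ dx^4)]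
    norm_num
  have hXb : |(Kv - (1/2 + t/2))*Sv| ≤ 7*t^2*B := by
    rw [abs_mul]
    exact mul_le_mul hK hSB (abs_nonneg _) (by positivity)
  have hYb : |(1/2 + t/2)*(Sv - S0)| ≤ 1*(2*M*dx^4) := by
    rw [abs_mul]
    apply mul_le_mul _ hS (abs_nonneg _) (by norm_num)
    rw [abs_of_pos (by linarith : (0:ℝ) < 1/2 + t/2)]
    linarith
  have htri : |(Kv - (1/2 + t/2))*Sv + (1/2 + t/2)*(Sv - S0) + a*u2/6*dx^4|
      ≤ |(Kv - (1/2 + t/2))*Sv| + |(1/2 + t/2)*(Sv - S0)| + |a*u2/6*dx^4| := by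
    calc _ ≤ |(Kv - (1/2 + t/2))*Sv + (1/2 + t/2)*(Sv - S0)| + |a*u2/6*dx^4| := abs_add_le _ _
      _ ≤ _ := by linarith [abs_add_le ((Kv - (1/2 + t/2))*Sv) ((1/2 + t/2)*(Sv - S0))]
  have ht2 : t^2 = a^2*dx^4 := by rw [ht]; ring
  calc |(Kv - (1/2 + t/2))*Sv + (1/2 + t/2)*(Sv - S0) + a*u2/6*dx^4|
      ≤ 7*t^2*B + 1*(2*M*dx^4) + a*|u2|/6*dx^4 := by
        rw [← hZ]; linarith [hXb, hYb, htri]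
    _ = 7*a^2*B*dx^4 + 2*M*dx^4 + a*|u2|/6*dx^4 := by rw [ht2]; ring
    _ ≤ C*dx^4 := by
        rw [hC]
        have hkey : (7*a^2*B + 2*M + a*|u2|/6 + 1)*dx^4
            - (7*a^2*B*dx^4 + 2*M*dx^4 + a*|u2|/6*dx^4) = dx^4 := by ring
        linarith [pow_nonneg hdx.le 4, hkey]
end

section
/- Let u : ℝ → ℝ be smooth (C⁵) and consider three consecutive grid points x_{i−1} = x_i − h, x_i, x_{i+1} = x_i + h with values fⱼ = u(xⱼ). Define γ_{i+1}h = −(f_{i+1} − f_i)/(f_i + δ) where δ has the sign of f_i and |δ| ≤ h⁵, and suppose f_i ≠ 0. Then the quantity e^{γ_{i+1}h} f_{i+1} − f_i is O(h²) as h → 0 (whereas the plain undivided difference f_{i+1} − f_i is only O(h) in general). -/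
set_option maxHeartbeats 1000000


open Real

theorem stmt_8 (u : ℝ → ℝ) (hu : ContDiff ℝ 5 u) (x : ℝ) (hux : u x ≠ 0) :
    ∃ C > 0, ∃ δ₀ > 0, ∀ h : ℝ, 0 < h → h < δ₀ →
      ∀ d : ℝ, |d| ≤ h ^ 5 → 0 ≤ d * u x →
        |Real.exp (-(u (x + h) - u x) / (u x + d)) * u (x + h) - u x| ≤ C * h ^ 2 := by
  -- u is locally Lipschitz
  have hu1 : ContDiff ℝ 1 u := hu.of_le (by norm_num)
  obtain ⟨K, t, ht, hK⟩ := hu1.locallyLipschitz x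
  obtain ⟨ε, hε, hball⟩ := Metric.mem_nhds_iff.mp ht
  set F : ℝ := |u x| with hF
  have hF0 : 0 < F := abs_pos.mpr hux
  set L : ℝ := (K : ℝ) + 1 with hL
  have hL1 : (1 : ℝ) ≤ L := le_add_of_nonneg_left K.2
  have hL0 : 0 < L := lt_of_lt_of_le one_pos hL1
  refine ⟨L ^ 2 / F ^ 2 * (F + 1) + L / F + 2 * L ^ 2 / F, by positivity,
    min ε (min 1 (F / L)), by positivity, ?_⟩
  intro h h0 hδ d hd hds
  have hε1 : h < ε := lt_of_lt_of_le hδ (min_le_left _ _)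
  have h1 : h < 1 := lt_of_lt_of_le hδ (le_trans (min_le_right _ _) (min_le_left _ _))
  have hFL : h < F / L := lt_of_lt_of_le hδ (le_trans (min_le_right _ _) (min_le_right _ _))
  set f : ℝ := u x with hfdef
  set a : ℝ := u (x + h) - u x with ha
  set s : ℝ := f + d with hs
  -- Lipschitz bound: |a| ≤ L * h
  have hxt : x ∈ t := hball (Metric.mem_ball_self hε)
  have hxht : x + h ∈ t := hball (by simp [Metric.mem_ball, Real.dist_eq, abs_of_pos h0, hε1])
  have haK : |a| ≤ K * h := by
    have := hK.dist_le_mul (x + h) hxht x hxt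
    rw [Real.dist_eq, Real.dist_eq] at this
    simpa [ha, abs_of_pos h0] using this
  have haL : |a| ≤ L * h := haK.trans (by nlinarith [K.2])
  -- |s| ≥ F
  have hsF : F ≤ |s| := by
    have : F ^ 2 ≤ s ^ 2 := by
      have : s ^ 2 = f ^ 2 + 2 * (d * f) + d ^ 2 := by ring
      rw [this]
      have : F ^ 2 = f ^ 2 := sq_abs f
      nlinarith [mul_comm d f]
    nlinarith [abs_nonneg s, sq_abs s]
  have hs0 : s ≠ 0 := by
    intro h'
    rw [h', abs_zero] at hsF
    linarith
  set T : ℝ := -a / s with hT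
  -- |T| ≤ L h / F ≤ 1
  have hTbound : |T| ≤ L * h / F := by
    rw [hT, abs_div, abs_neg]
    exact div_le_div₀ (by positivity) haL hF0 hsF
  have hLhF : L * h ≤ F := by
    have := (lt_div_iff₀ hL0).mp hFL
    nlinarith
  have hT1 : |T| ≤ 1 := hTbound.trans (by rw [div_le_one hF0]; exact hLhF)
  have hexp : |Real.exp T - 1 - T| ≤ T ^ 2 := Real.abs_exp_sub_one_sub_id_le hT1
  have hT2 : T ^ 2 ≤ L ^ 2 * h ^ 2 / F ^ 2 := by
    have := pow_le_pow_left₀ (abs_nonneg T) hTbound 2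
    rw [sq_abs] at this
    calc T ^ 2 ≤ (L * h / F) ^ 2 := this
      _ = L ^ 2 * h ^ 2 / F ^ 2 := by ring
  have hfa : |f + a| ≤ 2 * F := by
    calc |f + a| ≤ |f| + |a| := abs_add_le f a
      _ ≤ F + L * h := by
          have : |f| = F := rfl
          linarith [haL]
      _ ≤ 2 * F := by linarith
  have huxh : u (x + h) = f + a := by rw [ha]; ring
  have hid : Real.exp (-(u (x + h) - u x) / (u x + d)) * u (x + h) - u x
      = (Real.exp T - 1 - T) * (f + a) + (a * d - a ^ 2) / s := by
    have h1' : -(u (x + h) - u x) / (u x + d) = T := by rw [hT, ha, hs]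
    rw [h1', huxh, hT]
    field_simp
    ring
  rw [hid]
  have habs : |(Real.exp T - 1 - T) * (f + a) + (a * d - a ^ 2) / s|
      ≤ |Real.exp T - 1 - T| * |f + a| + |a * d - a ^ 2| / |s| := by
    calc _ ≤ |(Real.exp T - 1 - T) * (f + a)| + |(a * d - a ^ 2) / s| := abs_add_le _ _
      _ = |Real.exp T - 1 - T| * |f + a| + |a * d - a ^ 2| / |s| := by
          rw [abs_mul, abs_div]
  have hnum : |a * d - a ^ 2| ≤ L * h ^ 6 + L ^ 2 * h ^ 2 := by
    calc |a * d - a ^ 2| ≤ |a * d| + |a ^ 2| := abs_sub _ _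
      _ = |a| * |d| + |a| ^ 2 := by rw [abs_mul, abs_pow]
      _ ≤ (L * h) * h ^ 5 + (L * h) ^ 2 := by
          have h1 : |a| * |d| ≤ (L * h) * h ^ 5 :=
            mul_le_mul haL hd (abs_nonneg d) (by positivity)
          have h2 : |a| ^ 2 ≤ (L * h) ^ 2 := pow_le_pow_left₀ (abs_nonneg a) haL 2
          linarith
      _ = L * h ^ 6 + L ^ 2 * h ^ 2 := by ring
  have hdiv : |a * d - a ^ 2| / |s| ≤ (L * h ^ 6 + L ^ 2 * h ^ 2) / F :=
    div_le_div₀ (by positivity) hnum hF0 hsF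
  have hterm1 : |Real.exp T - 1 - T| * |f + a| ≤ (L ^ 2 * h ^ 2 / F ^ 2) * (2 * F) :=
    mul_le_mul (hexp.trans hT2) hfa (abs_nonneg _) (by positivity)
  have h6 : h ^ 6 ≤ h ^ 2 := by
    have h4 : h ^ 4 ≤ 1 := pow_le_one₀ h0.le h1.le
    calc h ^ 6 = h ^ 2 * h ^ 4 := by ring
      _ ≤ h ^ 2 * 1 := by nlinarith [sq_nonneg h]
      _ = h ^ 2 := by ring
  calc |(Real.exp T - 1 - T) * (f + a) + (a * d - a ^ 2) / s|
      ≤ (L ^ 2 * h ^ 2 / F ^ 2) * (2 * F) + (L * h ^ 6 + L ^ 2 * h ^ 2) / F := by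
        linarith [habs, hterm1, hdiv]
    _ ≤ (L ^ 2 / F ^ 2 * (F + 1) + L / F + 2 * L ^ 2 / F) * h ^ 2 := by
        rw [← sub_nonneg]
        have hE : (L ^ 2 / F ^ 2 * (F + 1) + L / F + 2 * L ^ 2 / F) * h ^ 2
            - ((L ^ 2 * h ^ 2 / F ^ 2) * (2 * F) + (L * h ^ 6 + L ^ 2 * h ^ 2) / F)
            = L * (h ^ 2 - h ^ 6) / F + L ^ 2 * h ^ 2 / F ^ 2 := by
          field_simp
          ring
        rw [hE]
        have h26 : 0 ≤ h ^ 2 - h ^ 6 := by linarith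
        have := div_nonneg (mul_nonneg hL0.le h26) hF0.le
        positivity
end
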